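/- For all natural numbers γ ≥ 1 and n with 0 ≤ n ≤ γ − 1, the non-degeneracy determinant D_{γn} := (ω_n²·C_{γγγγ} − 2·ω_γ²·C_{γγnn})·(ω_{2γ−n}²·C_{γγγγ} − 2·ω_γ²·C_{γ,γ,2γ−n,2γ−n}) − (ω_γ²·C_{γ,2γ−n,γ,n})² satisfies D_{γn} = ω_n·ω_γ²·(n − 3 − 4γ)·(n − γ)², where n − 3 − 4γ and n − γ are interpreted as integers; in particular D_{γn} < 0, so D_{γn} ≠ 0. -/

import Mathlib

open MeasureTheory

/-- Chebyshev polynomials of the second kind, as real-valued functions. -/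
noncomputable def chebU : ℕ → ℝ → ℝ
  | 0, _ => 1
  | 1, y => 2 * y
  | n + 2, y => 2 * y * chebU (n + 1) y - chebU n y

/-- Fourier coefficients of the cubic conformal wave equation on the Einstein cylinder
in spherical symmetry. -/
noncomputable def Ccoef (i j k m : ℕ) : ℝ :=
  (2 / Real.pi) *
    ∫ y in (-1:ℝ)..1, chebU i y * chebU j y * chebU k y * chebU m y * Real.sqrt (1 - y ^ 2)

/-- The non-degeneracy determinant `D_{γn}` of the spherically symmetric conformal
cubic wave equation. -/
noncomputable def Dcw (γ n : ℕ) : ℝ :=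
  (((n:ℝ) + 1) ^ 2 * Ccoef γ γ γ γ - 2 * ((γ:ℝ) + 1) ^ 2 * Ccoef γ γ n n) *
      ((((2 * γ - n : ℕ):ℝ) + 1) ^ 2 * Ccoef γ γ γ γ -
        2 * ((γ:ℝ) + 1) ^ 2 * Ccoef γ γ (2 * γ - n) (2 * γ - n)) -
    (((γ:ℝ) + 1) ^ 2 * Ccoef γ (2 * γ - n) γ n) ^ 2

/-!
Substituting `y = cos θ` turns `√(1 - y²) dy` into `sin² θ dθ` and `U_n(cos θ) sin θ` into
`sin ((n + 1) θ)`, so the `U_n` are orthogonal for this weight, each of squared norm `π / 2`.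
The product formula `U_{d+b} U_b = ∑_{j ≤ b} U_{d+2j}` expands `C_{b, d+b, d+c, c}` into a double
sum of such pairings, of which exactly `min b c + 1` are diagonal. All four coefficients in
`D_{γn}` have this shape, so `D_{γn}` is an explicit polynomial in `n` and `γ`.
-/

open Real

theorem integral_mul_sqrt_one_sub_sq_eq_integral_cos (f : ℝ → ℝ) :
    ∫ y in -1..1, f y * √(1 - y ^ 2) = ∫ θ in 0..π, f (cos θ) * sin θ ^ 2 :=
  calc ∫ y in -1..1, f y * √(1 - y ^ 2)
      = ∫ y in -1..1, f y * (1 - y ^ 2) * √(1 - y ^ 2)⁻¹ :=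
        intervalIntegral.integral_congr fun y _ => by
          rw [sqrt_inv, mul_assoc, ← div_eq_mul_inv, div_sqrt]
    -- `measureT` is the Chebyshev weight `(1 - y²)^(-1/2) dy`, already transported to `θ`.
    _ = ∫ θ in 0..π, f (cos θ) * (1 - cos θ ^ 2) := by
        rw [← Polynomial.Chebyshev.integral_measureT,
          Polynomial.Chebyshev.integral_measureT_eq_integral_cos]
    _ = ∫ θ in 0..π, f (cos θ) * sin θ ^ 2 := by simp_rw [← sin_sq]

theorem integral_cos_int_mul (k : ℤ) :
    ∫ θ in 0..π, cos (k * θ) = if k = 0 then π else 0 := by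
  split_ifs with hk
  · simp [hk]
  · rw [intervalIntegral.integral_comp_mul_left cos (Int.cast_ne_zero.mpr hk), integral_cos]
    simp [sin_int_mul_pi]

namespace Polynomial.Chebyshev

theorem U_add_mul_U_eq_sum {R : Type*} [CommRing R] (m : ℤ) (n : ℕ) :
    U R (m + n) * U R n = ∑ j ∈ Finset.range (n + 1), U R (m + 2 * j) := by
  induction n using Nat.twoStepInduction generalizing m with
  | zero => simp
  | one =>
    simp only [Finset.sum_range_succ, Finset.sum_range_zero, Nat.cast_zero, Nat.cast_one,
      mul_zero, mul_one, add_zero, U_one]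
    linear_combination (U_add_two R m).symm
  | more n ih₀ ih₁ =>
    -- `U_{n+2} = 2X U_{n+1} - U_n` and `2X U_{m+n+2} = U_{m+n+3} + U_{m+n+1}` reduce the claim
    -- to the cases `n`, `n + 1` at `m` and `m + 2`.
    have h := ih₁ (m + 2)
    rw [Finset.sum_range_succ, ← ih₀ (m + 2)] at h
    rw [Finset.sum_range_succ, ← ih₁ m]
    have hn := U_add_two R n
    have hm := U_add_two R (m + n + 1)
    push_cast at h hn ⊢
    ring_nf at h hn hm ⊢
    linear_combination U R (2 + m + n) * hn + h - U R (1 + n) * hm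

theorem integral_eval_U_real_mul_eval_U_real_mul_sqrt (a b : ℕ) :
    ∫ y in -1..1, (U ℝ a).eval y * (U ℝ b).eval y * √(1 - y ^ 2) =
      if a = b then π / 2 else 0 := by
  have h (θ : ℝ) : (U ℝ a).eval (cos θ) * (U ℝ b).eval (cos θ) * sin θ ^ 2 =
      (cos (((a - b : ℤ) : ℝ) * θ) - cos (((a + b + 2 : ℤ) : ℝ) * θ)) / 2 := by
    have hsub : ((a - b : ℤ) : ℝ) * θ = (a + 1) * θ - (b + 1) * θ := by push_cast; ring
    have hadd : ((a + b + 2 : ℤ) : ℝ) * θ = (a + 1) * θ + (b + 1) * θ := by push_cast; ring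
    rw [hsub, hadd, cos_sub, cos_add]
    have hUa := U_real_cos θ a
    have hUb := U_real_cos θ b
    push_cast at hUa hUb
    linear_combination (U ℝ b).eval (cos θ) * sin θ * hUa + sin ((a + 1) * θ) * hUb
  simp_rw [integral_mul_sqrt_one_sub_sq_eq_integral_cos, h]
  rw [intervalIntegral.integral_div,
    intervalIntegral.integral_sub (Continuous.intervalIntegrable (by fun_prop) _ _)
      (Continuous.intervalIntegrable (by fun_prop) _ _),
    integral_cos_int_mul, integral_cos_int_mul, if_neg (show (a + b + 2 : ℤ) ≠ 0 by omega)]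
  simp only [sub_eq_zero, Nat.cast_inj]
  split_ifs <;> ring

end Polynomial.Chebyshev

open Polynomial.Chebyshev

theorem chebU_eq_eval_U (n : ℕ) (y : ℝ) : chebU n y = (U ℝ n).eval y := by
  induction n using Nat.twoStepInduction with
  | zero => simp [chebU]
  | one => simp [chebU]
  | more n ih₀ ih₁ =>
    rw [chebU, ih₀, ih₁]
    push_cast
    simp [U_add_two]

theorem Ccoef_eq_min_add_one (b c d : ℕ) : Ccoef b (d + b) (d + c) c = min b c + 1 := by
  have hprod (y : ℝ) :
      chebU b y * chebU (d + b) y * chebU (d + c) y * chebU c y * √(1 - y ^ 2) =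
      ∑ j ∈ Finset.range (b + 1), ∑ k ∈ Finset.range (c + 1),
        (U ℝ ↑(d + 2 * j)).eval y * (U ℝ ↑(d + 2 * k)).eval y * √(1 - y ^ 2) := by
    have hb := congrArg (Polynomial.eval y) (U_add_mul_U_eq_sum (R := ℝ) d b)
    have hc := congrArg (Polynomial.eval y) (U_add_mul_U_eq_sum (R := ℝ) d c)
    simp only [Polynomial.eval_mul, Polynomial.eval_finsetSum] at hb hc
    calc _ = ((U ℝ (d + b)).eval y * (U ℝ b).eval y) *
          ((U ℝ (d + c)).eval y * (U ℝ c).eval y) * √(1 - y ^ 2) := by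
          simp only [chebU_eq_eval_U]; push_cast; ring
      _ = _ := by
          rw [hb, hc, Finset.sum_mul_sum, Finset.sum_mul]
          push_cast
          simp [Finset.sum_mul]
  have hrow (j : ℕ) : ∫ y in -1..1, ∑ k ∈ Finset.range (c + 1),
        (U ℝ ↑(d + 2 * j)).eval y * (U ℝ ↑(d + 2 * k)).eval y * √(1 - y ^ 2) =
      if j ∈ Finset.range (c + 1) then π / 2 else 0 := by
    rw [intervalIntegral.integral_finsetSum fun k _ =>
      Continuous.intervalIntegrable (by fun_prop) _ _]
    simp_rw [integral_eval_U_real_mul_eval_U_real_mul_sqrt, add_right_inj,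
      mul_right_inj' two_ne_zero]
    exact Finset.sum_ite_eq _ _ _
  unfold Ccoef
  simp_rw [hprod]
  rw [intervalIntegral.integral_finsetSum fun j _ =>
    Continuous.intervalIntegrable (by fun_prop) _ _]
  simp_rw [hrow, Finset.sum_ite_mem, Finset.range_inter_range, Finset.sum_const,
    Finset.card_range, min_add_add_right, nsmul_eq_mul]
  push_cast
  field_simp

theorem Dcw_eq (γ n : ℕ) (hn : n ≤ γ) :
    Dcw γ n =
      ((n:ℝ) + 1) * ((γ:ℝ) + 1) ^ 2 * ((n:ℝ) - 3 - 4 * (γ:ℝ)) * ((n:ℝ) - (γ:ℝ)) ^ 2 := by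
  have hγγ : Ccoef γ γ γ γ = γ + 1 := by simpa using Ccoef_eq_min_add_one γ γ 0
  have hγn : Ccoef γ γ n n = n + 1 := by simpa [hn] using Ccoef_eq_min_add_one γ n 0
  have hγr : Ccoef γ γ (2 * γ - n) (2 * γ - n) = γ + 1 := by
    simpa [show γ ≤ 2 * γ - n by omega] using Ccoef_eq_min_add_one γ (2 * γ - n) 0
  have hmix : Ccoef γ (2 * γ - n) γ n = n + 1 := by
    simpa [show γ - n + γ = 2 * γ - n by omega, Nat.sub_add_cancel hn, hn]
      using Ccoef_eq_min_add_one γ n (γ - n)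
  rw [Dcw, hγγ, hγn, hγr, hmix, Nat.cast_sub (by omega)]
  push_cast
  ring

theorem Dcw_formula_and_neg_general (γ n : ℕ) (hn : n + 1 ≤ γ) :
    Dcw γ n =
        ((n:ℝ) + 1) * ((γ:ℝ) + 1) ^ 2 * ((n:ℝ) - 3 - 4 * (γ:ℝ)) * ((n:ℝ) - (γ:ℝ)) ^ 2 ∧
      Dcw γ n < 0 := by
  have hD := Dcw_eq γ n (by omega)
  refine ⟨hD, hD ▸ ?_⟩
  have hlt : (n:ℝ) < γ := by exact_mod_cast hn
  have hsq : 0 < ((n:ℝ) - γ) ^ 2 := sq_pos_of_ne_zero (sub_ne_zero.2 hlt.ne)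
  exact mul_neg_of_neg_of_pos (mul_neg_of_pos_of_neg (by positivity) (by linarith)) hsq

/-- Closed formula and strict negativity of the non-degeneracy determinant. -/
theorem Dcw_formula_and_neg (γ n : ℕ) (hγ : 1 ≤ γ) (hn : n + 1 ≤ γ) :
    Dcw γ n =
        ((n:ℝ) + 1) * ((γ:ℝ) + 1) ^ 2 * ((n:ℝ) - 3 - 4 * (γ:ℝ)) * ((n:ℝ) - (γ:ℝ)) ^ 2 ∧
      Dcw γ n < 0 :=
  Dcw_formula_and_neg_general γ n hn
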